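/- In a complete CAT(0) (Hadamard) metric space X, for every probability measure μ on X with finite second moment (i.e., ∫ d(x,t)² dμ(t) < ∞ for some x), the function s ↦ ∫ d(s,t)² dμ(t) has a unique minimizer (the Fréchet mean, or barycenter, of μ). -/
import Mathlib


open Set MeasureTheory Filter Topology

/-- A choice of geodesics on a metric space `X`, satisfying the CAT(0)
comparison inequality: this encodes that `X` is a geodesic space of
nonpositive curvature (together with `CompleteSpace X`, an Hadamard space). -/
structure GeodesicCAT0 (X : Type*) [MetricSpace X] where
  γ : X → X → ℝ → X
  γ_zero : ∀ p q, γ p q 0 = p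
  γ_one : ∀ p q, γ p q 1 = q
  γ_dist : ∀ p q : X, ∀ s ∈ Set.Icc (0:ℝ) 1, ∀ t ∈ Set.Icc (0:ℝ) 1,
    dist (γ p q s) (γ p q t) = |s - t| * dist p q
  cat0 : ∀ p q x : X, ∀ t ∈ Set.Icc (0:ℝ) 1,
    dist x (γ p q t) ^ 2 ≤ (1 - t) * dist x p ^ 2 + t * dist x q ^ 2
      - t * (1 - t) * dist p q ^ 2

/-- In a complete CAT(0) (Hadamard) space, every probability measure with finite
second moment has a unique Fréchet mean (barycenter): the function
 has a unique minimizer. -/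
theorem frechet_mean_exists_unique {X : Type*} [MetricSpace X] [CompleteSpace X]
    [MeasurableSpace X] [BorelSpace X] (H : GeodesicCAT0 X)
    (μ : Measure X) [IsProbabilityMeasure μ]
    (x₀ : X) (hx₀ : Integrable (fun t => dist x₀ t ^ 2) μ) :
    ∃! b : X, ∀ s : X, ∫ t, dist b t ^ 2 ∂μ ≤ ∫ t, dist s t ^ 2 ∂μ := by
  haveI : Nonempty X := ⟨x₀⟩
  have meas : ∀ s : X, AEStronglyMeasurable (fun t => dist s t ^ 2) μ :=
    fun s => ((continuous_const.dist continuous_id).pow 2).aestronglyMeasurable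
  have int2 : ∀ s : X, Integrable (fun t => dist s t ^ 2) μ := by
    intro s
    refine ((integrable_const (2 * dist s x₀ ^ 2)).add (hx₀.const_mul 2)).mono' (meas s) ?_
    filter_upwards with t
    simp only [Pi.add_apply]
    rw [Real.norm_eq_abs, abs_of_nonneg (by positivity)]
    have h := dist_triangle s x₀ t
    nlinarith [sq_nonneg (dist s x₀ - dist x₀ t), dist_nonneg (x := s) (y := x₀),
      dist_nonneg (x := x₀) (y := t), dist_nonneg (x := s) (y := t)]
  have int1 : ∀ s : X, Integrable (fun t => dist s t) μ := by
    intro s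
    refine ((integrable_const 1).add (int2 s)).mono'
      ((continuous_const.dist continuous_id).aestronglyMeasurable) ?_
    filter_upwards with t
    simp only [Pi.add_apply]
    rw [Real.norm_eq_abs, abs_of_nonneg dist_nonneg]
    nlinarith [sq_nonneg (dist s t - 1)]
  set F : X → ℝ := fun s => ∫ t, dist s t ^ 2 ∂μ with hF
  set G : X → ℝ := fun s => ∫ t, dist s t ∂μ with hG
  have Fnonneg : ∀ s, 0 ≤ F s := fun s => integral_nonneg (fun t => by positivity)
  -- Key inequality A : expansion of the square of the triangle inequality
  have keyA : ∀ p q : X, F p ≤ F q + dist p q ^ 2 + 2 * dist p q * G q := by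
    intro p q
    have hpt : ∀ t, dist p t ^ 2 ≤ dist p q ^ 2 + 2 * dist p q * dist q t + dist q t ^ 2 := by
      intro t
      nlinarith [dist_triangle p q t, dist_nonneg (x := p) (y := t),
        dist_nonneg (x := p) (y := q), dist_nonneg (x := q) (y := t)]
    have ic : Integrable (fun _ : X => dist p q ^ 2) μ := integrable_const _
    have il : Integrable (fun t => 2 * dist p q * dist q t) μ := (int1 q).const_mul _
    have isum : Integrable (fun t => dist p q ^ 2 + 2 * dist p q * dist q t) μ := by
      exact ic.add il
    have hint : Integrable (fun t => dist p q ^ 2 + 2 * dist p q * dist q t + dist q t ^ 2) μ := by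
      exact isum.add (int2 q)
    calc F p ≤ ∫ t, (dist p q ^ 2 + 2 * dist p q * dist q t + dist q t ^ 2) ∂μ :=
          integral_mono (int2 p) hint hpt
      _ = F q + dist p q ^ 2 + 2 * dist p q * G q := by
          rw [integral_add isum (int2 q), integral_add ic il,
            integral_const, integral_const_mul]
          simp [hF, hG]
          ring
  have keyGA : ∀ p q : X, G p ≤ G q + dist p q := by
    intro p q
    have hpt : ∀ t, dist p t ≤ dist p q + dist q t := fun t => dist_triangle p q t
    calc G p ≤ ∫ t, (dist p q + dist q t) ∂μ :=
          integral_mono (int1 p) ((integrable_const _).add (int1 q)) hpt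
      _ = G q + dist p q := by
          rw [integral_add (integrable_const _ : Integrable (fun _ : X => dist p q) μ) (int1 q),
            integral_const]
          simp [hG]; ring
  -- Key inequality B : variance inequality at midpoints
  have keyB : ∀ p q : X,
      F (H.γ p q (1/2)) ≤ (1/2) * F p + (1/2) * F q - (1/4) * dist p q ^ 2 := by
    intro p q
    have hmem : (1/2 : ℝ) ∈ Set.Icc (0:ℝ) 1 := by norm_num
    have hpt : ∀ t : X, dist (H.γ p q (1/2)) t ^ 2 ≤
        (1/2) * dist p t ^ 2 + (1/2) * dist q t ^ 2 - (1/4) * dist p q ^ 2 := by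
      intro t
      have h := H.cat0 p q t (1/2) hmem
      rw [dist_comm (H.γ p q (1/2)) t, dist_comm p t, dist_comm q t]
      nlinarith [h]
    have ip : Integrable (fun t => (1/2) * dist p t ^ 2) μ := (int2 p).const_mul _
    have iq : Integrable (fun t => (1/2) * dist q t ^ 2) μ := (int2 q).const_mul _
    have isum : Integrable (fun t => (1/2) * dist p t ^ 2 + (1/2) * dist q t ^ 2) μ := by
      exact ip.add iq
    have hint : Integrable
        (fun t => (1/2) * dist p t ^ 2 + (1/2) * dist q t ^ 2 - (1/4) * dist p q ^ 2) μ := by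
      exact isum.sub (integrable_const _)
    calc F (H.γ p q (1/2))
        ≤ ∫ t, ((1/2) * dist p t ^ 2 + (1/2) * dist q t ^ 2 - (1/4) * dist p q ^ 2) ∂μ :=
          integral_mono (int2 _) hint hpt
      _ = (1/2) * F p + (1/2) * F q - (1/4) * dist p q ^ 2 := by
          rw [integral_sub isum (integrable_const _), integral_add ip iq,
            integral_const_mul, integral_const_mul, integral_const]
          simp [hF]
  have hbdd : BddBelow (Set.range F) := ⟨0, by rintro y ⟨s, rfl⟩; exact Fnonneg s⟩
  set m : ℝ := ⨅ s, F s with hm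
  have hmle : ∀ s, m ≤ F s := fun s => ciInf_le hbdd s
  -- minimizing sequence
  have hseq : ∀ n : ℕ, ∃ s, F s < m + 1/(n+1) := by
    intro n
    have h : m < m + 1/(n+1) := lt_add_of_pos_right m (by positivity)
    exact exists_lt_of_ciInf_lt h
  choose u hu using hseq
  have hdistsq : ∀ i j : ℕ, dist (u i) (u j) ^ 2 ≤ 2/(i+1) + 2/(j+1) := by
    intro i j
    have h1 := keyB (u i) (u j)
    have h2 := hmle (H.γ (u i) (u j) (1/2))
    have h3 := hu i
    have h4 := hu j
    have e1 : (2:ℝ)/((i:ℝ)+1) = 2 * (1/((i:ℝ)+1)) := by ring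
    have e2 : (2:ℝ)/((j:ℝ)+1) = 2 * (1/((j:ℝ)+1)) := by ring
    rw [e1, e2]
    linarith
  have hcauchy : CauchySeq u := by
    rw [Metric.cauchySeq_iff]
    intro ε hε
    obtain ⟨N, hN⟩ := exists_nat_gt (4 / ε ^ 2)
    refine ⟨N, fun i hi j hj => ?_⟩
    have hN' : 4 / ε ^ 2 < (N:ℝ) + 1 := lt_of_lt_of_le hN (by linarith)
    have h4 : 4 / ((N:ℝ) + 1) < ε ^ 2 := by
      rw [div_lt_iff₀ (by positivity)]
      rw [div_lt_iff₀ (by positivity)] at hN'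
      linarith
    have hij : dist (u i) (u j) ^ 2 ≤ 4 / ((N:ℝ)+1) := by
      have h1 := hdistsq i j
      have hiN : 2/((i:ℝ)+1) ≤ 2/((N:ℝ)+1) := by
        apply div_le_div_of_nonneg_left (by norm_num) (by positivity)
        exact_mod_cast by omega
      have hjN : 2/((j:ℝ)+1) ≤ 2/((N:ℝ)+1) := by
        apply div_le_div_of_nonneg_left (by norm_num) (by positivity)
        exact_mod_cast by omega
      have e : (4:ℝ)/((N:ℝ)+1) = 2/((N:ℝ)+1) + 2/((N:ℝ)+1) := by ring
      rw [e]
      linarith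
    nlinarith [dist_nonneg (x := u i) (y := u j), hε]
  obtain ⟨b, hb⟩ := cauchySeq_tendsto_of_complete hcauchy
  have hd0 : Tendsto (fun n => dist b (u n)) atTop (𝓝 0) := by
    have h : Tendsto (fun n => dist (u n) b) atTop (𝓝 (dist b b)) :=
      hb.dist tendsto_const_nhds
    simp only [dist_self] at h
    simpa [dist_comm] using h
  have hFu : Tendsto (fun n => F (u n)) atTop (𝓝 m) := by
    refine tendsto_of_tendsto_of_tendsto_of_le_of_le tendsto_const_nhds ?_
      (fun n => hmle (u n)) (fun n => (hu n).le)
    have h : Tendsto (fun n : ℕ => m + 1/((n:ℝ)+1)) atTop (𝓝 (m + 0)) :=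
      tendsto_const_nhds.add tendsto_one_div_add_atTop_nhds_zero_nat
    simpa using h
  have hFb : F b ≤ m := by
    have bound : ∀ n, F b ≤ F (u n) + dist b (u n) ^ 2
        + 2 * dist b (u n) * (G b + dist b (u n)) := by
      intro n
      have h1 := keyA b (u n)
      have h2 : G (u n) ≤ G b + dist b (u n) := by
        have h := keyGA (u n) b
        rwa [dist_comm] at h
      nlinarith [dist_nonneg (x := b) (y := u n)]
    have hT : Tendsto (fun n => F (u n) + dist b (u n) ^ 2
        + 2 * dist b (u n) * (G b + dist b (u n))) atTop (𝓝 m) := by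
      have h : Tendsto (fun n => F (u n) + dist b (u n) ^ 2
          + 2 * dist b (u n) * (G b + dist b (u n))) atTop
          (𝓝 (m + 0 ^ 2 + 2 * 0 * (G b + 0))) :=
        (hFu.add (hd0.pow 2)).add ((hd0.const_mul 2).mul (tendsto_const_nhds.add hd0))
      simpa using h
    exact ge_of_tendsto hT (Eventually.of_forall bound)
  refine ⟨b, fun s => hFb.trans (hmle s), ?_⟩
  intro b' hb'
  have h1 : F b' ≤ F b := hb' b
  have h2 := keyB b' b
  have h3 : F b' ≤ F (H.γ b' b (1/2)) := hb' _
  have h4 : F b ≤ F b' := hFb.trans (hmle b')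
  have hd : dist b' b ^ 2 ≤ 0 := by linarith
  have : dist b' b = 0 := by nlinarith [dist_nonneg (x := b') (y := b)]
  exact dist_eq_zero.mp this
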